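/- arXiv:1110.2114 — 2 statements merged into one kernel-verified Lean document; each statement's English description precedes it below -/
import Mathlib

section
/- For every real number y ≥ 0 there exists a unique x ∈ [0, 2·arsinh(1)) such that F(x) = y, where F(x) = x/2 + arsinh( sinh(x/2) / √(1 − sinh²(x/2)) ). In other words, F maps [0, 2·arsinh(1)) bijectively onto [0, ∞). -/
open Real Set

/- On `[0, 2·arsinh 1)` the map `F` is continuous and strictly increasing with `F 0 = 0`. For `y ≥ 0`
the point `x₀ = 2·arsinh (tanh y)` lies in the interval and `F x₀ = arsinh (tanh y) + y ≥ y`, because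
`s ↦ s / √(1 - s²)` sends `tanh y` to `sinh y`; the intermediate value theorem on `[0, x₀]` gives
existence, and strict monotonicity gives uniqueness. -/

noncomputable def F (x : ℝ) : ℝ :=
  x / 2 + arsinh (sinh (x / 2) / √(1 - sinh (x / 2) ^ 2))

lemma strictMonoOn_div_sqrt_one_sub_sq : StrictMonoOn (fun s : ℝ ↦ s / √(1 - s ^ 2)) (Ico 0 1) := by
  rintro a ⟨ha, -⟩ b ⟨-, hb⟩ hab
  have hsqrt_pos : 0 < √(1 - b ^ 2) := sqrt_pos.mpr (by nlinarith)
  have hsqrt_le : √(1 - b ^ 2) ≤ √(1 - a ^ 2) := sqrt_le_sqrt (by nlinarith)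
  exact div_lt_div₀ hab hsqrt_le (ha.trans hab.le) hsqrt_pos

lemma continuousOn_div_sqrt_one_sub_sq :
    ContinuousOn (fun s : ℝ ↦ s / √(1 - s ^ 2)) (Ioo (-1) 1) := by
  refine continuousOn_id.div (by fun_prop) fun s ⟨hs₁, hs₂⟩ ↦ (sqrt_pos.mpr ?_).ne'
  nlinarith

lemma tanh_div_sqrt_one_sub_tanh_sq (t : ℝ) : tanh t / √(1 - tanh t ^ 2) = sinh t := by
  have hcosh := cosh_pos t
  have h : 1 - tanh t ^ 2 = (cosh t)⁻¹ ^ 2 := by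
    rw [tanh_eq_sinh_div_cosh]
    field_simp
    linarith [cosh_sq t]
  rw [h, sqrt_sq (by positivity), tanh_eq_sinh_div_cosh]
  field_simp

lemma sinh_half_mem_Ico {x : ℝ} (hx : x ∈ Ico 0 (2 * arsinh 1)) : sinh (x / 2) ∈ Ico 0 1 :=
  ⟨sinh_nonneg_iff.mpr (by linarith [hx.1]),
    by simpa using sinh_lt_sinh.mpr (show x / 2 < arsinh 1 by linarith [hx.2])⟩

lemma strictMonoOn_F : StrictMonoOn F (Ico 0 (2 * arsinh 1)) := by
  intro a ha b hb hab
  have hsinh : sinh (a / 2) < sinh (b / 2) := sinh_lt_sinh.mpr (by linarith)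
  have hratio := strictMonoOn_div_sqrt_one_sub_sq (sinh_half_mem_Ico ha) (sinh_half_mem_Ico hb) hsinh
  have := arsinh_lt_arsinh.mpr hratio
  unfold F
  linarith

lemma continuousOn_F : ContinuousOn F (Ico 0 (2 * arsinh 1)) := by
  refine (continuous_id.div_const 2).continuousOn.add (continuous_arsinh.comp_continuousOn ?_)
  refine continuousOn_div_sqrt_one_sub_sq.comp (by fun_prop) fun x hx ↦ ?_
  obtain ⟨h₀, h₁⟩ := sinh_half_mem_Ico hx
  exact ⟨by linarith, h₁⟩

lemma F_zero : F 0 = 0 := by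
  simp [F]

lemma F_two_mul_arsinh_tanh (t : ℝ) : F (2 * arsinh (tanh t)) = arsinh (tanh t) + t := by
  simp only [F, mul_div_cancel_left₀ _ (two_ne_zero' ℝ), sinh_arsinh,
    tanh_div_sqrt_one_sub_tanh_sq, arsinh_sinh]

/-- for every `y ≥ 0` there is a unique `x ∈ [0, 2·arsinh 1)` with `F x = y`,
where `F(x) = x/2 + arsinh(sinh(x/2)/√(1 − sinh²(x/2)))`. -/
theorem stmt_3 (y : ℝ) (hy : 0 ≤ y) :
    ∃! x : ℝ, x ∈ Set.Ico 0 (2 * Real.arsinh 1) ∧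
      x / 2 + Real.arsinh (Real.sinh (x / 2) / Real.sqrt (1 - Real.sinh (x / 2) ^ 2)) = y := by
  have harsinh : 0 ≤ arsinh (tanh y) :=
    arsinh_nonneg_iff.mpr (by rw [tanh_eq_sinh_div_cosh]; positivity)
  set x₀ := 2 * arsinh (tanh y)
  have hx₀_nonneg : 0 ≤ x₀ := by positivity
  have hx₀_lt : x₀ < 2 * arsinh 1 := by
    linarith [arsinh_lt_arsinh.mpr (tanh_lt_one y)]
  have hIcc : Icc 0 x₀ ⊆ Ico 0 (2 * arsinh 1) := Icc_subset_Ico_right hx₀_lt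
  have hy_mem : y ∈ Icc (F 0) (F x₀) := by
    rw [F_zero, F_two_mul_arsinh_tanh]
    exact ⟨hy, by linarith⟩
  obtain ⟨x, hx, hFx⟩ := intermediate_value_Icc hx₀_nonneg (continuousOn_F.mono hIcc) hy_mem
  exact ⟨x, ⟨hIcc hx, hFx⟩, fun z hz ↦ strictMonoOn_F.injOn hz.1 (hIcc hx) (hz.2.trans hFx.symm)⟩
end

section
/- For every x ∈ [0, 1), one has F(x) ≤ 2x, where F(x) = x/2 + arsinh( sinh(x/2) / √(1 − sinh²(x/2)) ). (For such x one has sinh(x/2) < 1, so F is well defined.) -/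
/-!
With `t = x / 2` and `s = sinh t`, the claim reads `arsinh (s / √(1 - s²)) ≤ 3t`. For `t ≤ 1/2`
one has `s² < e / 4 < 8 / 9`, so `√(1 - s²) ≥ 1 / 3` and `s / √(1 - s²) ≤ 3s ≤ 4s³ + 3s = sinh 3t`.
-/

open Real

lemma div_sqrt_one_sub_sq_le_three_mul {s : ℝ} (hs₀ : 0 ≤ s) (hs : s ^ 2 ≤ 8 / 9) :
    s / √(1 - s ^ 2) ≤ 3 * s := by
  have hsqrt : 1 / 3 ≤ √(1 - s ^ 2) := Real.le_sqrt_of_sq_le (by linarith)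
  rw [div_le_iff₀ (by linarith)]
  nlinarith

lemma three_mul_sinh_le_sinh_three_mul {t : ℝ} (ht : 0 ≤ t) : 3 * sinh t ≤ sinh (3 * t) := by
  rw [sinh_three_mul]
  nlinarith [pow_nonneg (sinh_nonneg_iff.2 ht) 3]

lemma sinh_sq_le_of_le_half {t : ℝ} (ht₀ : 0 ≤ t) (ht : t ≤ 1 / 2) : sinh t ^ 2 ≤ 8 / 9 := by
  have hsinh_le : sinh t ≤ exp t / 2 := by
    rw [sinh_eq]
    linarith [exp_pos (-t)]
  have hexp : exp t ^ 2 ≤ exp 1 := by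
    rw [← exp_nat_mul]
    exact exp_le_exp.2 (by push_cast; linarith)
  nlinarith [sinh_nonneg_iff.2 ht₀, exp_one_lt_three]

lemma arsinh_sinh_div_sqrt_le {t : ℝ} (ht₀ : 0 ≤ t) (ht : t ≤ 1 / 2) :
    arsinh (sinh t / √(1 - sinh t ^ 2)) ≤ 3 * t := by
  calc arsinh (sinh t / √(1 - sinh t ^ 2))
      ≤ arsinh (sinh (3 * t)) := arsinh_le_arsinh.2 <|
        (div_sqrt_one_sub_sq_le_three_mul (sinh_nonneg_iff.2 ht₀)
          (sinh_sq_le_of_le_half ht₀ ht)).trans (three_mul_sinh_le_sinh_three_mul ht₀)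
    _ = 3 * t := arsinh_sinh _

/-- for every `x ∈ [0,1)`, `F(x) ≤ 2x`, where
`F(x) = x/2 + arsinh(sinh(x/2)/√(1 − sinh²(x/2)))`. -/
theorem stmt_4 (x : ℝ) (hx : x ∈ Set.Ico (0 : ℝ) 1) :
    x / 2 + Real.arsinh (Real.sinh (x / 2) / Real.sqrt (1 - Real.sinh (x / 2) ^ 2)) ≤ 2 * x := by
  have h := arsinh_sinh_div_sqrt_le (t := x / 2) (by linarith [hx.1]) (by linarith [hx.2])
  linarith
end
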